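/- Let q ≥ 3 and λ = 2cos(π/q), and consider the Hecke group G_q ⊆ PSL(2,ℝ) generated by S = [[0,1],[−1,0]] and T = [[1,λ],[0,1]]. If g = [[a,x],[b,y]] and h = [[a,u],[b,v]] are two elements of G_q with the same first column, then h = g·[[1,mλ],[0,1]] for some integer m; in particular the second element differs from the first by a power of T. -/

import Mathlib

open Real

/-- The generator `S = [[0,1],[-1,0]]` as an element of `SL(2,ℝ)`. -/
noncomputable def Smat : Matrix.SpecialLinearGroup (Fin 2) ℝ :=
  ⟨!![0, 1; -1, 0], by norm_num [Matrix.det_fin_two_of]⟩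

/-- The generator `T = [[1,λ_q],[0,1]]` as an element of `SL(2,ℝ)`. -/
noncomputable def Tmat (q : ℕ) : Matrix.SpecialLinearGroup (Fin 2) ℝ :=
  ⟨!![1, 2 * Real.cos (π / q); 0, 1], by norm_num [Matrix.det_fin_two_of]⟩

/-!
The Hecke group is generated by `S` and `R = S⁻¹T`, with `S² = Rᵠ = -1`, so up to sign each of
its elements is a reduced word alternating `S` and powers `Rᵏ`, `0 < k < q`. For such `k` the
entries of `Rᵏ` are, up to sign, Chebyshev values `sin ((j+1)π/q) / sin (π/q) ≥ 0`, and a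
ping-pong argument on the point `U • ∞ = a / c` shows that words beginning with `S` send `∞` into
`[0, ∞]` and words beginning with a power of `R` into `[-∞, 0]`, where the endpoints are reached
only by `±Tᵐ` and `±S⁻¹Tᵐ`. So an element with `c = 0` is `±Tᵐ`; for `g⁻¹h` the first column is
`(1, 0)`, forcing the sign `+`.
-/

open Polynomial.Chebyshev Matrix.SpecialLinearGroup
open scoped MatrixGroups

theorem Matrix.SpecialLinearGroup.inv_mul_apply_of_col_eq {n R : Type*} [Fintype n]
    [DecidableEq n] [CommRing R] {g h : SpecialLinearGroup n R} {k : n}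
    (hcol : ∀ i, g i k = h i k) (i : n) : (g⁻¹ * h) i k = (1 : Matrix n n R) i k := by
  simp only [coe_mul, Matrix.mul_apply, ← hcol]
  rw [← Matrix.mul_apply, ← coe_mul, inv_mul_cancel, coe_one]

theorem Polynomial.Chebyshev.companion_pow_eq_eval_U {R : Type*} [CommRing R] (x : R) (n : ℕ) :
    !![0, -1; 1, 2 * x] ^ n =
      !![-(U R (n - 2)).eval x, -(U R (n - 1)).eval x; (U R (n - 1)).eval x, (U R n).eval x] := by
  induction n with
  | zero => simp [Matrix.one_fin_two, U_neg_two, U_neg_one]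
  | succ n ih =>
    have h1 : ((n + 1 : ℕ) : ℤ) - 2 = n - 1 := by push_cast; ring
    have h2 : ((n + 1 : ℕ) : ℤ) - 1 = n := by push_cast; ring
    rw [pow_succ, ih, Matrix.mul_fin_two, h1, h2, Nat.cast_succ, U_add_one, U_eq R n]
    simp only [Polynomial.eval_sub, Polynomial.eval_mul, Polynomial.eval_X, Polynomial.eval_ofNat]
    ext i j
    fin_cases i <;> fin_cases j <;> simp <;> ring

section Hecke

variable {q : ℕ}

noncomputable def chebU (q : ℕ) (n : ℤ) : ℝ := (U ℝ n).eval (cos (π / q))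

theorem sin_pi_div_pos (hq : 2 ≤ q) : 0 < sin (π / q) := by
  have hq' : (1 : ℝ) < q := by exact_mod_cast hq
  exact sin_pos_of_pos_of_lt_pi (by positivity) (div_lt_self pi_pos hq')

theorem chebU_eq_sin_div (hq : 2 ≤ q) (n : ℤ) :
    chebU q n = sin ((n + 1) * (π / q)) / sin (π / q) := by
  rw [chebU, eq_div_iff (sin_pi_div_pos hq).ne', U_real_cos]

theorem chebU_self_sub_two (hq : 2 ≤ q) : chebU q (q - 2) = 1 := by
  have hq0 : (q : ℝ) ≠ 0 := by positivity
  rw [chebU_eq_sin_div hq, div_eq_one_iff_eq (sin_pi_div_pos hq).ne']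
  push_cast
  rw [show ((q : ℝ) - 2 + 1) * (π / q) = π - π / q by field_simp; ring, sin_pi_sub]

theorem chebU_self_sub_one (hq : 2 ≤ q) : chebU q (q - 1) = 0 := by
  have hq0 : (q : ℝ) ≠ 0 := by positivity
  rw [chebU_eq_sin_div hq]
  push_cast
  rw [sub_add_cancel, mul_div_cancel₀ _ hq0, sin_pi, zero_div]

theorem chebU_self (hq : 2 ≤ q) : chebU q q = -1 := by
  have hq0 : (q : ℝ) ≠ 0 := by positivity
  rw [chebU_eq_sin_div hq]
  push_cast
  rw [show ((q : ℝ) + 1) * (π / q) = π / q + π by field_simp; ring, sin_add_pi, neg_div,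
    div_self (sin_pi_div_pos hq).ne']

theorem chebU_nonneg (hq : 2 ≤ q) {n : ℤ} (hn : -1 ≤ n) (hnq : n + 1 ≤ q) :
    0 ≤ chebU q n := by
  rw [chebU_eq_sin_div hq]
  refine div_nonneg (sin_nonneg_of_nonneg_of_le_pi ?_ ?_) (sin_pi_div_pos hq).le
  · have : (0 : ℝ) ≤ n + 1 := by exact_mod_cast (by omega : (0 : ℤ) ≤ n + 1)
    positivity
  · have : (n : ℝ) + 1 ≤ q := by exact_mod_cast hnq
    rw [← mul_div_assoc, div_le_iff₀ (by positivity)]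
    nlinarith [pi_pos]

theorem chebU_pos (hq : 2 ≤ q) {n : ℤ} (hn : 0 ≤ n) (hnq : n + 2 ≤ q) :
    0 < chebU q n := by
  rw [chebU_eq_sin_div hq]
  refine div_pos (sin_pos_of_pos_of_lt_pi ?_ ?_) (sin_pi_div_pos hq)
  · have : (0 : ℝ) ≤ n := by exact_mod_cast hn
    have : 0 < π / q := by positivity
    positivity
  · have : (n : ℝ) + 2 ≤ q := by exact_mod_cast hnq
    rw [← mul_div_assoc, div_lt_iff₀ (by positivity)]
    nlinarith [pi_pos]

noncomputable def Rmat (q : ℕ) : SL(2, ℝ) := Smat⁻¹ * Tmat q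

theorem coe_Smat : (Smat : Matrix (Fin 2) (Fin 2) ℝ) = !![0, 1; -1, 0] := rfl

theorem coe_Tmat : (Tmat q : Matrix (Fin 2) (Fin 2) ℝ) = !![1, 2 * cos (π / q); 0, 1] := rfl

theorem Smat_mul_Smat : Smat * Smat = -1 := by
  ext i j
  fin_cases i <;> fin_cases j <;> simp [coe_Smat]

theorem Smat_inv : Smat⁻¹ = -Smat :=
  inv_eq_of_mul_eq_one_right (by rw [mul_neg, Smat_mul_Smat, neg_neg])

theorem Smat_mul_Rmat : Smat * Rmat q = Tmat q := mul_inv_cancel_left _ _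

theorem coe_Rmat : (Rmat q : Matrix (Fin 2) (Fin 2) ℝ) = !![0, -1; 1, 2 * cos (π / q)] := by
  rw [Rmat, coe_mul, Smat_inv, coe_neg, coe_Smat, coe_Tmat]
  ext i j
  fin_cases i <;> fin_cases j <;> simp

theorem coe_Rmat_pow (n : ℕ) : (↑(Rmat q ^ n) : Matrix (Fin 2) (Fin 2) ℝ) =
    !![-chebU q (n - 2), -chebU q (n - 1); chebU q (n - 1), chebU q n] := by
  rw [coe_pow, coe_Rmat, companion_pow_eq_eval_U]
  rfl

theorem Rmat_pow_self (hq : 2 ≤ q) : Rmat q ^ q = -1 := by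
  ext i j
  rw [coe_Rmat_pow, chebU_self_sub_two hq, chebU_self_sub_one hq, chebU_self hq]
  fin_cases i <;> fin_cases j <;> simp

theorem Rmat_pow_pred_mul_Smat (hq : 2 ≤ q) : Rmat q ^ (q - 1) * Smat = (Tmat q)⁻¹ := by
  refine eq_inv_of_mul_eq_one_left ?_
  rw [mul_assoc, ← Smat_mul_Rmat, ← mul_assoc Smat, Smat_mul_Smat, neg_one_mul, mul_neg,
    ← pow_succ, Nat.sub_add_cancel (by omega), Rmat_pow_self hq, neg_neg]

theorem coe_Tmat_zpow (m : ℤ) :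
    (↑(Tmat q ^ m) : Matrix (Fin 2) (Fin 2) ℝ) = !![1, m * (2 * cos (π / q)); 0, 1] := by
  induction m using Int.induction_on with
  | zero => simp [Matrix.one_fin_two]
  | succ m ih =>
    rw [zpow_add_one, coe_mul, ih, coe_Tmat, Matrix.mul_fin_two]
    push_cast
    ext i j
    fin_cases i <;> fin_cases j <;> simp
    ring
  | pred m ih =>
    rw [zpow_sub_one, coe_mul, ih, coe_inv, coe_Tmat, Matrix.adjugate_fin_two_of,
      Matrix.mul_fin_two]
    push_cast
    ext i j
    fin_cases i <;> fin_cases j <;> simp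
    ring

theorem Smat_mul_apply_zero_zero (U : SL(2, ℝ)) : (Smat * U) 0 0 = U 1 0 := by
  simp [coe_Smat, Matrix.mul_apply, Fin.sum_univ_two]

theorem Smat_mul_apply_one_zero (U : SL(2, ℝ)) : (Smat * U) 1 0 = -U 0 0 := by
  simp [coe_Smat, Matrix.mul_apply, Fin.sum_univ_two]

theorem Rmat_pow_mul_apply_zero_zero (k : ℕ) (U : SL(2, ℝ)) :
    (Rmat q ^ k * U) 0 0 = -(chebU q (k - 2) * U 0 0 + chebU q (k - 1) * U 1 0) := by
  rw [coe_mul, coe_Rmat_pow]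
  simp [Matrix.mul_apply, Fin.sum_univ_two]
  ring

theorem Rmat_pow_mul_apply_one_zero (k : ℕ) (U : SL(2, ℝ)) :
    (Rmat q ^ k * U) 1 0 = chebU q (k - 1) * U 0 0 + chebU q k * U 1 0 := by
  rw [coe_mul, coe_Rmat_pow]
  simp [Matrix.mul_apply, Fin.sum_univ_two]

def IsTPowUpToSign (q : ℕ) (U : SL(2, ℝ)) : Prop := ∃ m : ℤ, U = Tmat q ^ m ∨ U = -Tmat q ^ m

namespace IsTPowUpToSign

theorem one : IsTPowUpToSign q 1 := ⟨0, Or.inl (zpow_zero _).symm⟩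

theorem neg {U : SL(2, ℝ)} (h : IsTPowUpToSign q U) : IsTPowUpToSign q (-U) := by
  obtain ⟨m, rfl | rfl⟩ := h
  exacts [⟨m, Or.inr rfl⟩, ⟨m, Or.inl (neg_neg _)⟩]

theorem Tmat_mul {U : SL(2, ℝ)} (h : IsTPowUpToSign q U) : IsTPowUpToSign q (Tmat q * U) := by
  obtain ⟨m, rfl | rfl⟩ := h
  · exact ⟨1 + m, Or.inl (by rw [zpow_one_add])⟩
  · exact ⟨1 + m, Or.inr (by rw [mul_neg, zpow_one_add])⟩

theorem Tmat_inv_mul {U : SL(2, ℝ)} (h : IsTPowUpToSign q U) :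
    IsTPowUpToSign q ((Tmat q)⁻¹ * U) := by
  obtain ⟨m, rfl | rfl⟩ := h
  · exact ⟨-1 + m, Or.inl (by rw [zpow_add, zpow_neg_one])⟩
  · exact ⟨-1 + m, Or.inr (by rw [mul_neg, zpow_add, zpow_neg_one])⟩

theorem apply_one_zero {U : SL(2, ℝ)} (h : IsTPowUpToSign q U) : U 1 0 = 0 := by
  obtain ⟨m, rfl | rfl⟩ := h <;> simp [coe_Tmat_zpow]

theorem apply_zero_zero_ne_zero {U : SL(2, ℝ)} (h : IsTPowUpToSign q U) : U 0 0 ≠ 0 := by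
  obtain ⟨m, rfl | rfl⟩ := h <;> simp [coe_Tmat_zpow]

end IsTPowUpToSign

/- `U • ∞ = U 0 0 / U 1 0` lies in `[0, ∞]` (resp. `[-∞, 0]`); the endpoints `∞` and `0` are
admitted only in the strong form `U = ±Tᵐ`, resp. `S * U = ±Tᵐ`. -/
def SendsInftyToNonneg (q : ℕ) (U : SL(2, ℝ)) : Prop :=
  IsTPowUpToSign q U ∨ IsTPowUpToSign q (Smat * U) ∨ 0 < U 0 0 * U 1 0

def SendsInftyToNonpos (q : ℕ) (U : SL(2, ℝ)) : Prop :=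
  IsTPowUpToSign q U ∨ IsTPowUpToSign q (Smat * U) ∨ U 0 0 * U 1 0 < 0

theorem SendsInftyToNonpos.Smat_mul {U : SL(2, ℝ)} (h : SendsInftyToNonpos q U) :
    SendsInftyToNonneg q (Smat * U) := by
  rcases h with h | h | h
  · refine Or.inr (Or.inl ?_)
    rw [← mul_assoc, Smat_mul_Smat, neg_one_mul]
    exact h.neg
  · exact Or.inl h
  · refine Or.inr (Or.inr ?_)
    rw [Smat_mul_apply_zero_zero, Smat_mul_apply_one_zero]
    linarith

theorem SendsInftyToNonneg.Rmat_pow_mul (hq : 2 ≤ q) {k : ℕ} (hk : 0 < k) (hkq : k < q)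
    {U : SL(2, ℝ)} (h : SendsInftyToNonneg q U) : SendsInftyToNonpos q (Rmat q ^ k * U) := by
  have hp : 0 ≤ chebU q (k - 2) := chebU_nonneg hq (by omega) (by omega)
  have hr : 0 < chebU q (k - 1) := chebU_pos hq (by omega) (by omega)
  have hs : 0 ≤ chebU q k := chebU_nonneg hq (by omega) (by omega)
  rcases h with h | h | h
  · by_cases hk1 : k = 1
    · refine Or.inr (Or.inl ?_)
      rw [hk1, pow_one, ← mul_assoc, Smat_mul_Rmat]
      exact h.Tmat_mul
    · refine Or.inr (Or.inr ?_)
      have hp' : 0 < chebU q (k - 2) := chebU_pos hq (by omega) (by omega)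
      rw [Rmat_pow_mul_apply_zero_zero, Rmat_pow_mul_apply_one_zero, h.apply_one_zero]
      nlinarith [mul_pos hp' hr, sq_pos_of_ne_zero h.apply_zero_zero_ne_zero]
  · by_cases hk1 : k = q - 1
    · refine Or.inl ?_
      rw [hk1, ← mul_inv_cancel_left Smat U, ← mul_assoc, Rmat_pow_pred_mul_Smat hq, Smat_inv,
        neg_mul, mul_neg]
      exact h.Tmat_inv_mul.neg
    · refine Or.inr (Or.inr ?_)
      have hs' : 0 < chebU q k := chebU_pos hq (by omega) (by omega)
      have ha : U 0 0 = 0 := by simpa [Smat_mul_apply_one_zero] using h.apply_one_zero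
      have hc : U 1 0 ≠ 0 := by simpa [Smat_mul_apply_zero_zero] using h.apply_zero_zero_ne_zero
      rw [Rmat_pow_mul_apply_zero_zero, Rmat_pow_mul_apply_one_zero, ha]
      nlinarith [mul_pos hr hs', sq_pos_of_ne_zero hc]
  · refine Or.inr (Or.inr ?_)
    rw [Rmat_pow_mul_apply_zero_zero, Rmat_pow_mul_apply_one_zero]
    -- `(p a + r c) (r a + s c) = p r a² + p s a c + r² a c + r s c²`, and `r² a c > 0`
    nlinarith [mul_nonneg (mul_nonneg hp hr.le) (sq_nonneg (U 0 0)),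
      mul_nonneg (mul_nonneg hp hs) h.le, mul_pos (mul_pos hr hr) h,
      mul_nonneg (mul_nonneg hr.le hs) (sq_nonneg (U 1 0))]

-- Reduced words in `S` and `R`, sorted by their first letter.
mutual
inductive SWord (q : ℕ) : SL(2, ℝ) → Prop
  | one : SWord q 1
  | Smat_mul {U : SL(2, ℝ)} : RWord q U → SWord q (Smat * U)
inductive RWord (q : ℕ) : SL(2, ℝ) → Prop
  | one : RWord q 1
  | Rmat_pow_mul {U : SL(2, ℝ)} {k : ℕ} : 0 < k → k < q → SWord q U → RWord q (Rmat q ^ k * U)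
end

mutual
theorem SWord.sendsInftyToNonneg (hq : 2 ≤ q) :
    ∀ {U : SL(2, ℝ)}, SWord q U → SendsInftyToNonneg q U
  | _, .one => Or.inl .one
  | _, .Smat_mul h => (RWord.sendsInftyToNonpos hq h).Smat_mul
theorem RWord.sendsInftyToNonpos (hq : 2 ≤ q) :
    ∀ {U : SL(2, ℝ)}, RWord q U → SendsInftyToNonpos q U
  | _, .one => Or.inl .one
  | _, .Rmat_pow_mul hk hkq h => (SWord.sendsInftyToNonneg hq h).Rmat_pow_mul hq hk hkq
end

def IsReducedUpToSign (q : ℕ) (U : SL(2, ℝ)) : Prop :=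
  ∃ V, (SWord q V ∨ RWord q V) ∧ (U = V ∨ U = -V)

namespace IsReducedUpToSign

theorem of_word {U : SL(2, ℝ)} (h : SWord q U ∨ RWord q U) : IsReducedUpToSign q U :=
  ⟨U, h, Or.inl rfl⟩

theorem neg {U : SL(2, ℝ)} (h : IsReducedUpToSign q U) : IsReducedUpToSign q (-U) := by
  obtain ⟨V, hV, hUV | hUV⟩ := h <;> rw [hUV]
  exacts [⟨V, hV, Or.inr rfl⟩, ⟨V, hV, Or.inl (neg_neg V)⟩]

theorem mul_of_forall_word {X U : SL(2, ℝ)}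
    (hX : ∀ V, SWord q V ∨ RWord q V → IsReducedUpToSign q (X * V))
    (h : IsReducedUpToSign q U) : IsReducedUpToSign q (X * U) := by
  obtain ⟨V, hV, hUV | hUV⟩ := h <;> rw [hUV]
  · exact hX V hV
  · rw [mul_neg]
    exact (hX V hV).neg

theorem Smat_mul {U : SL(2, ℝ)} (h : IsReducedUpToSign q U) :
    IsReducedUpToSign q (Smat * U) := by
  refine h.mul_of_forall_word fun V hV => ?_
  rcases hV with hV | hV
  · cases hV with
    | one => exact of_word (Or.inl (.Smat_mul .one))
    | Smat_mul hW =>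
      rw [← mul_assoc, Smat_mul_Smat, neg_one_mul]
      exact (of_word (Or.inr hW)).neg
  · exact of_word (Or.inl (.Smat_mul hV))

theorem Rmat_mul (hq : 2 ≤ q) {U : SL(2, ℝ)} (h : IsReducedUpToSign q U) :
    IsReducedUpToSign q (Rmat q * U) := by
  refine h.mul_of_forall_word fun V hV => ?_
  rcases hV with hV | hV
  · rw [← pow_one (Rmat q)]
    exact of_word (Or.inr (.Rmat_pow_mul one_pos (by omega) hV))
  · cases hV with
    | one =>
      rw [← pow_one (Rmat q)]
      exact of_word (Or.inr (.Rmat_pow_mul one_pos (by omega) .one))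
    | @Rmat_pow_mul W k _ hkq hW =>
      rw [← mul_assoc, ← pow_succ']
      rcases (Nat.succ_le_of_lt hkq).lt_or_eq with hlt | (heq : k + 1 = q)
      · exact of_word (Or.inr (.Rmat_pow_mul k.succ_pos hlt hW))
      · rw [heq, Rmat_pow_self hq, neg_one_mul]
        exact (of_word (Or.inl hW)).neg

theorem Rmat_pow_mul (hq : 2 ≤ q) (n : ℕ) {U : SL(2, ℝ)} (h : IsReducedUpToSign q U) :
    IsReducedUpToSign q (Rmat q ^ n * U) := by
  induction n with
  | zero => rwa [pow_zero, one_mul]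
  | succ n ih =>
    rw [pow_succ', mul_assoc]
    exact ih.Rmat_mul hq

end IsReducedUpToSign

theorem isReducedUpToSign_of_mem_closure (hq : 2 ≤ q) {U : SL(2, ℝ)}
    (hU : U ∈ Subgroup.closure {Smat, Tmat q}) : IsReducedUpToSign q U := by
  induction hU using Subgroup.closure_induction_left with
  | one => exact .of_word (Or.inl .one)
  | mul_left x hx y _ ih =>
    rcases hx with rfl | rfl
    · exact ih.Smat_mul
    · rw [← Smat_mul_Rmat, mul_assoc]
      exact (ih.Rmat_mul hq).Smat_mul
  | inv_mul_cancel x hx y _ ih =>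
    rcases hx with rfl | rfl
    · rw [Smat_inv, neg_mul]
      exact ih.Smat_mul.neg
    · rw [← Rmat_pow_pred_mul_Smat hq, mul_assoc]
      exact ih.Smat_mul.Rmat_pow_mul hq _

theorem isTPowUpToSign_of_mem_closure (hq : 2 ≤ q) {U : SL(2, ℝ)}
    (hU : U ∈ Subgroup.closure {Smat, Tmat q}) (h10 : U 1 0 = 0) : IsTPowUpToSign q U := by
  obtain ⟨V, hV, hUV⟩ := isReducedUpToSign_of_mem_closure hq hU
  have hV10 : V 1 0 = 0 := by
    rcases hUV with rfl | rfl
    · exact h10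
    · simpa using h10
  have hstate : IsTPowUpToSign q V ∨ IsTPowUpToSign q (Smat * V) ∨ V 0 0 * V 1 0 ≠ 0 := by
    rcases hV with hV | hV
    · exact (hV.sendsInftyToNonneg hq).imp_right (Or.imp_right ne_of_gt)
    · exact (hV.sendsInftyToNonpos hq).imp_right (Or.imp_right ne_of_lt)
  rcases hstate with hI | hI | hI
  · rcases hUV with rfl | rfl
    exacts [hI, hI.neg]
  · exact absurd (Smat_mul_apply_zero_zero V ▸ hV10) hI.apply_zero_zero_ne_zero
  · exact absurd (by rw [hV10, mul_zero]) hI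

end Hecke

/-- Key step of Lemma 3.1: two elements of the Hecke group (the subgroup of `SL(2,ℝ)`
generated by `S` and `T`) with the same first column differ by a power of `T`. -/
theorem stmt_10 (q : ℕ) (hq : 3 ≤ q) (g h : Matrix.SpecialLinearGroup (Fin 2) ℝ)
    (hg : g ∈ Subgroup.closure ({Smat, Tmat q} : Set (Matrix.SpecialLinearGroup (Fin 2) ℝ)))
    (hh : h ∈ Subgroup.closure ({Smat, Tmat q} : Set (Matrix.SpecialLinearGroup (Fin 2) ℝ)))
    (hcol : ∀ i, (g : Matrix (Fin 2) (Fin 2) ℝ) i 0 = (h : Matrix (Fin 2) (Fin 2) ℝ) i 0) :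
    ∃ m : ℤ, h = g * (Tmat q) ^ m := by
  have h00 : (g⁻¹ * h) 0 0 = 1 := by simpa using inv_mul_apply_of_col_eq hcol 0
  have h10 : (g⁻¹ * h) 1 0 = 0 := by simpa using inv_mul_apply_of_col_eq hcol 1
  obtain ⟨m, hm | hm⟩ :=
    isTPowUpToSign_of_mem_closure (by omega) (mul_mem (inv_mem hg) hh) h10
  · exact ⟨m, by rw [← hm, mul_inv_cancel_left]⟩
  · rw [hm, coe_neg, Matrix.neg_apply, coe_Tmat_zpow] at h00
    norm_num at h00
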